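/- arXiv:1810.11417 — 4 statements merged into one kernel-verified Lean document; each statement's English description precedes it below -/
import Mathlib

section
/- Let G be a finite cyclic subgroup of U(2) of order q ≥ 2 that acts freely on the unit sphere S³ ⊂ ℂ² (i.e., g • v = v for some v with ‖v‖ = 1 implies g = 1). Then there exist a generator g of G, a unitary matrix U ∈ U(2), and an integer p with 0 < p < q and gcd(p, q) = 1, such that U g U⁻¹ is the diagonal matrix with diagonal entries exp(2πi/q) and exp(2πip/q). -/
open Complex

/-- The diagonal unitary `2×2` matrix with diagonal entries `exp(2πi/q)` and `exp(2πip/q)`. -/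
noncomputable def lensDiagMatrix (q p : ℤ) : Matrix (Fin 2) (Fin 2) ℂ :=
  Matrix.diagonal ![Complex.exp (2 * Real.pi * Complex.I / q),
                    Complex.exp (2 * Real.pi * Complex.I * p / q)]

/-!
A unitary `2 × 2` matrix is unitarily diagonalisable: complete a unit eigenvector to a unitary
matrix, and the conjugate is an upper triangular unitary matrix, hence diagonal. If
`U g₀ U⁻¹ = diag(μ₀, μ₁)` for a generator `g₀`, then `g₀ ^ l` fixes a column of `U⁻¹` exactly
when `μᵢ ^ l = 1`, so freeness makes `μ₀` and `μ₁` primitive `q`-th roots of unity. Passing to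
the generator `g₀ ^ c` with `μ₀ ^ c = exp(2πi/q)` turns `μ₁ ^ c` into `exp(2πi/q) ^ p` for a
unit `p` mod `q`.
-/

open Matrix ComplexConjugate

section UnitaryGroup

variable {n : Type*} [Fintype n] [DecidableEq n]

theorem Matrix.UnitaryGroup.norm_toLp_mulVec (U : unitaryGroup n ℂ) (x : n → ℂ) :
    ‖WithLp.toLp 2 ((U : Matrix n n ℂ) *ᵥ x)‖ = ‖WithLp.toLp 2 x‖ := by
  rw [← toEuclideanCLM_toLp]
  exact ContinuousLinearMap.norm_map_of_mem_unitary (Unitary.map_mem _ U.prop) _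

theorem Matrix.UnitaryGroup.conj_pow_eq_diagonal_pow {α : Type*} [CommRing α] [StarRing α]
    {U A : unitaryGroup n α} {d : n → α}
    (h : ((U * A * U⁻¹ : unitaryGroup n α) : Matrix n n α) = diagonal d) (k : ℕ) :
    ((U * A ^ k * U⁻¹ : unitaryGroup n α) : Matrix n n α) = diagonal (d ^ k) := by
  rw [← conj_pow, SubmonoidClass.coe_pow, h, diagonal_pow]

theorem Matrix.exists_star_dotProduct_self_eq_one_mulVec_eq_smul [Nonempty n]
    (A : Matrix n n ℂ) : ∃ (v : n → ℂ) (μ : ℂ), star v ⬝ᵥ v = 1 ∧ A *ᵥ v = μ • v := by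
  obtain ⟨μ, hμ⟩ := Module.End.exists_eigenvalue (toEuclideanLin A)
  obtain ⟨x, hx⟩ := hμ.exists_hasEigenvector
  set y : EuclideanSpace ℂ n := (‖x‖ : ℂ)⁻¹ • x
  have hy : ‖y‖ = 1 := by
    simp only [y, norm_smul, norm_inv, Complex.norm_real, norm_norm]
    exact inv_mul_cancel₀ (norm_ne_zero_iff.mpr hx.2)
  refine ⟨WithLp.ofLp y, μ, ?_, ?_⟩
  · rw [dotProduct_comm, ← EuclideanSpace.inner_eq_star_dotProduct, inner_self_eq_norm_sq_to_K,
      hy]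
    simp
  · have := congrArg WithLp.ofLp ((toEuclideanLin A).map_smul ((‖x‖ : ℂ)⁻¹) x)
    rw [hx.apply_eq_smul] at this
    simpa [y, smul_comm μ, mulVec_smul] using this

def ActsFreelyOnUnitSphere (G : Subgroup (unitaryGroup n ℂ)) : Prop :=
  ∀ g : G, ∀ v : EuclideanSpace ℂ n, ‖v‖ = 1 →
    Matrix.mulVec ((g : unitaryGroup n ℂ) : Matrix n n ℂ) v = v → g = 1

namespace ActsFreelyOnUnitSphere

variable {G : Subgroup (unitaryGroup n ℂ)} (hG : ActsFreelyOnUnitSphere G)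
  {g : G} {U : unitaryGroup n ℂ} {d : n → ℂ}
  (h : ((U * g * U⁻¹ : unitaryGroup n ℂ) : Matrix n n ℂ) = diagonal d)
include hG h

theorem eq_one_of_conj_eq_diagonal {i : n} (hi : d i = 1) : g = 1 := by
  refine hG g (WithLp.toLp 2 ((U⁻¹ : unitaryGroup n ℂ) *ᵥ Pi.single i 1)) ?_ ?_
  · rw [UnitaryGroup.norm_toLp_mulVec, PiLp.toLp_single, PiLp.norm_single, norm_one]
  · have hg : ((g : unitaryGroup n ℂ) : Matrix n n ℂ) * (U⁻¹ : unitaryGroup n ℂ) =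
        (U⁻¹ : unitaryGroup n ℂ) * diagonal d := by
      rw [← h, ← Submonoid.coe_mul, ← Submonoid.coe_mul]
      group
    show ((g : unitaryGroup n ℂ) : Matrix n n ℂ) *ᵥ _ = _
    rw [WithLp.ofLp_toLp, mulVec_mulVec, hg, ← mulVec_mulVec, diagonal_mulVec_single, hi,
      one_mul]

theorem isPrimitiveRoot_of_conj_eq_diagonal (i : n) : IsPrimitiveRoot (d i) (orderOf g) := by
  have hpow (k : ℕ) := UnitaryGroup.conj_pow_eq_diagonal_pow h k
  refine ⟨?_, fun l hl => orderOf_dvd_of_pow_eq_one ?_⟩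
  · have := congrFun (congrFun (hpow (orderOf g)) i) i
    rw [← Subgroup.coe_pow, pow_orderOf_eq_one] at this
    simpa using this.symm
  · have hl' : (d ^ l) i = 1 := by simpa using hl
    exact hG.eq_one_of_conj_eq_diagonal (by simpa using hpow l) hl'

end ActsFreelyOnUnitSphere

end UnitaryGroup

theorem Matrix.exists_mem_unitaryGroup_col_zero_eq {v : Fin 2 → ℂ} (hv : star v ⬝ᵥ v = 1) :
    ∃ V : unitaryGroup (Fin 2) ℂ, (V : Matrix (Fin 2) (Fin 2) ℂ).col 0 = v := by
  have hv' : v 0 * conj (v 0) + v 1 * conj (v 1) = 1 := by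
    simpa [dotProduct, Fin.sum_univ_two, mul_comm] using hv
  refine ⟨⟨!![v 0, -conj (v 1); v 1, conj (v 0)], ?_⟩, ?_⟩
  · rw [mem_unitaryGroup_iff']
    ext i j
    fin_cases i <;> fin_cases j <;> simp [mul_apply, Fin.sum_univ_two, mul_comm, add_comm, hv']
  · ext i
    fin_cases i <;> rfl

theorem Matrix.UnitaryGroup.eq_diagonal_of_fin_two_apply_one_zero (B : unitaryGroup (Fin 2) ℂ)
    (h : B 1 0 = 0) : (B : Matrix (Fin 2) (Fin 2) ℂ) = diagonal ![B 0 0, B 1 1] := by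
  have hB := congrFun (mem_unitaryGroup_iff'.mp B.prop) 0
  have h00 := congrFun hB 0
  have h01 := congrFun hB 1
  simp only [Matrix.mul_apply, Fin.sum_univ_two, star_apply, h, star_zero, zero_mul, add_zero,
    one_apply_eq, one_apply_ne zero_ne_one, mul_eq_zero] at h00 h01
  have h01' : B 0 1 = 0 := h01.resolve_left fun h0 => by simp [h0] at h00
  ext i j
  fin_cases i <;> fin_cases j <;> simp [h, h01']

theorem Matrix.UnitaryGroup.exists_conj_eq_diagonal_of_fin_two (A : unitaryGroup (Fin 2) ℂ) :
    ∃ (U : unitaryGroup (Fin 2) ℂ) (d : Fin 2 → ℂ),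
      ((U * A * U⁻¹ : unitaryGroup (Fin 2) ℂ) : Matrix (Fin 2) (Fin 2) ℂ) = diagonal d := by
  obtain ⟨v, μ, hv, hAv⟩ :=
    exists_star_dotProduct_self_eq_one_mulVec_eq_smul (A : Matrix (Fin 2) (Fin 2) ℂ)
  obtain ⟨V, hV⟩ := exists_mem_unitaryGroup_col_zero_eq hv
  rw [← mulVec_single_one] at hV
  set B := V⁻¹ * A * V
  have hB : (B : Matrix (Fin 2) (Fin 2) ℂ) *ᵥ Pi.single 0 1 = μ • Pi.single 0 1 :=
    calc (B : Matrix (Fin 2) (Fin 2) ℂ) *ᵥ Pi.single 0 1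
        = (V⁻¹ : unitaryGroup (Fin 2) ℂ) *ᵥ ((A : Matrix (Fin 2) (Fin 2) ℂ) *ᵥ v) := by
          rw [Submonoid.coe_mul, Submonoid.coe_mul, ← mulVec_mulVec, ← mulVec_mulVec, hV]
      _ = μ • ((V⁻¹ * V : unitaryGroup (Fin 2) ℂ) : Matrix (Fin 2) (Fin 2) ℂ) *ᵥ
            Pi.single 0 1 := by
          rw [hAv, mulVec_smul, ← hV, Submonoid.coe_mul, mulVec_mulVec]
      _ = μ • Pi.single 0 1 := by rw [inv_mul_cancel, Submonoid.coe_one, one_mulVec]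
  refine ⟨V⁻¹, ![B 0 0, B 1 1], ?_⟩
  rw [inv_inv]
  exact eq_diagonal_of_fin_two_apply_one_zero B (by simpa using congrFun hB 1)

theorem IsPrimitiveRoot.exists_pow_eq_and_pow_eq_pow {R : Type*} [CommRing R] [IsDomain R]
    {k : ℕ} [NeZero k] {ζ μ ν : R} (hζ : IsPrimitiveRoot ζ k) (hμ : IsPrimitiveRoot μ k)
    (hν : IsPrimitiveRoot ν k) :
    ∃ c p : ℕ, c.Coprime k ∧ p < k ∧ p.Coprime k ∧ μ ^ c = ζ ∧ ν ^ c = ζ ^ p := by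
  obtain ⟨c, -, hc⟩ := hμ.eq_pow_of_pow_eq_one hζ.pow_eq_one
  obtain ⟨p, hpk, hp⟩ := hμ.eq_pow_of_pow_eq_one hν.pow_eq_one
  refine ⟨c, p, (hμ.pow_iff_coprime (NeZero.pos k) c).mp (hc ▸ hζ), hpk,
    (hμ.pow_iff_coprime (NeZero.pos k) p).mp (hp ▸ hν), hc, ?_⟩
  rw [← hp, ← hc, ← pow_mul, ← pow_mul, mul_comm]

theorem Subgroup.zpowers_pow_eq_top_of_coprime {G : Type*} [Group G] [Finite G] {g : G}
    (hg : zpowers g = ⊤) {c : ℕ} (hc : c.Coprime (orderOf g)) : zpowers (g ^ c) = ⊤ := by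
  apply eq_top_of_card_eq
  rw [Nat.card_zpowers, Nat.Coprime.orderOf_pow hc.symm, ← Nat.card_zpowers, hg, card_top]

theorem lensDiagMatrix_natCast (q p : ℕ) :
    lensDiagMatrix q p =
      diagonal ![exp (2 * Real.pi * I / q), exp (2 * Real.pi * I / q) ^ p] := by
  rw [lensDiagMatrix, ← Complex.exp_nat_mul]
  congr 4
  push_cast
  ring

/-- A finite cyclic subgroup of `U(2)` of order `q ≥ 2` acting freely on the unit sphere
`S³ ⊂ ℂ²` is conjugate, within `U(2)`, to the standard cyclic group generated by the
diagonal matrix `diag(exp(2πi/q), exp(2πip/q))` for some `0 < p < q` with `gcd(p,q) = 1`. -/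
theorem cyclic_subgroup_unitary_free_conj_diagonal
    (G : Subgroup (Matrix.unitaryGroup (Fin 2) ℂ)) [Finite G] [IsCyclic G]
    (q : ℕ) (hq : 2 ≤ q) (hcard : Nat.card G = q)
    (hfree : ∀ g : G, ∀ v : EuclideanSpace ℂ (Fin 2), ‖v‖ = 1 →
        Matrix.mulVec ((g : Matrix.unitaryGroup (Fin 2) ℂ) : Matrix (Fin 2) (Fin 2) ℂ) v = v →
        g = 1) :
    ∃ (g : G) (U : Matrix.unitaryGroup (Fin 2) ℂ) (p : ℤ),
      Subgroup.zpowers g = (⊤ : Subgroup G) ∧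
      0 < p ∧ p < (q : ℤ) ∧ Int.gcd p (q : ℤ) = 1 ∧
      (U : Matrix (Fin 2) (Fin 2) ℂ) *
          ((g : Matrix.unitaryGroup (Fin 2) ℂ) : Matrix (Fin 2) (Fin 2) ℂ) *
          ((U⁻¹ : Matrix.unitaryGroup (Fin 2) ℂ) : Matrix (Fin 2) (Fin 2) ℂ) =
        lensDiagMatrix (q : ℤ) p := by
  obtain ⟨g₀, hg₀⟩ := IsCyclic.exists_generator (α := G)
  have hord : orderOf g₀ = q := by rw [orderOf_eq_card_of_forall_mem_zpowers hg₀, hcard]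
  have : NeZero q := ⟨by omega⟩
  obtain ⟨U, d, hU⟩ :=
    UnitaryGroup.exists_conj_eq_diagonal_of_fin_two (g₀ : unitaryGroup (Fin 2) ℂ)
  have hd (i : Fin 2) : IsPrimitiveRoot (d i) q :=
    hord ▸ ActsFreelyOnUnitSphere.isPrimitiveRoot_of_conj_eq_diagonal hfree hU i
  obtain ⟨c, p, hc, hpq, hp, hζ₀, hζ₁⟩ :=
    (isPrimitiveRoot_exp q (NeZero.ne q)).exists_pow_eq_and_pow_eq_pow (hd 0) (hd 1)
  have hp₀ : p ≠ 0 := by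
    rintro rfl
    rw [Nat.coprime_zero_left] at hp
    omega
  have hgen : Subgroup.zpowers g₀ = ⊤ := Subgroup.eq_top_iff' _ |>.mpr hg₀
  refine ⟨g₀ ^ c, U, p, Subgroup.zpowers_pow_eq_top_of_coprime hgen (hord ▸ hc),
    by omega, by omega, by rwa [Int.gcd_natCast_natCast], ?_⟩
  rw [Subgroup.coe_pow, ← Submonoid.coe_mul, ← Submonoid.coe_mul,
    UnitaryGroup.conj_pow_eq_diagonal_pow hU, lensDiagMatrix_natCast, ← hζ₁, ← hζ₀]
  congr 1
  ext i
  fin_cases i <;> rfl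
end

section
/- The quotient of the unitary group U(2) by its center is isomorphic as a group to SO(3): there exists a group isomorphism U(2) / Z(U(2)) ≃* SO(3). -/
/-
`U(2)` acts by conjugation `X ↦ U X Uᴴ` on the traceless Hermitian `2 × 2` matrices, preserving
`(X, Y) ↦ trace (X Y) / 2`, for which the Pauli matrices `σ₁, σ₂, σ₃` are orthonormal; this
gives a homomorphism `U(2) → O(3)`. Its image lies in `SO(3)`: on all of `M₂(ℂ)` the map
`X ↦ U X W` is conjugate to `Wᵀ ⊗ U`, of determinant `(det U det W)²`. Its kernel consists of the
`U` commuting with every `σⱼ`, hence with all of `M₂(ℂ)`, i.e. the centre. It is onto because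
every rotation is a product `R_z R_x R_z` (Euler angles) and rotations about the first and third
axes have explicit unitary lifts.
-/

/-- `SO(3)`: the group of real orthogonal `3×3` matrices of determinant `1`,
realized as a subgroup of the orthogonal group `O(3)`. -/
def SO3 : Subgroup (Matrix.orthogonalGroup (Fin 3) ℝ) where
  carrier := {A | ((A : Matrix (Fin 3) (Fin 3) ℝ)).det = 1}
  one_mem' := by simp
  mul_mem' := by
    intro a b ha hb
    simp only [Set.mem_setOf_eq, Matrix.UnitaryGroup.mul_val, Matrix.det_mul] at *
    rw [ha, hb, mul_one]
  inv_mem' := by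
    intro a ha
    simp only [Set.mem_setOf_eq, Matrix.UnitaryGroup.inv_val, Matrix.star_eq_conjTranspose,
      Matrix.det_conjTranspose, star_trivial] at *
    exact ha

open Complex Kronecker

noncomputable section

lemma exists_spherical_coords {a b c : ℝ} (h : a ^ 2 + b ^ 2 + c ^ 2 = 1) :
    ∃ c₁ s₁ s₂ : ℝ, c₁ ^ 2 + s₁ ^ 2 = 1 ∧ c ^ 2 + s₂ ^ 2 = 1 ∧ a = s₁ * s₂ ∧ b = c₁ * s₂ := by
  set s₂ := √(a ^ 2 + b ^ 2)
  have hs₂ : s₂ ^ 2 = a ^ 2 + b ^ 2 := Real.sq_sqrt (by positivity)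
  rcases eq_or_ne s₂ 0 with hzero | hpos
  · have ha : a = 0 := by nlinarith
    have hb : b = 0 := by nlinarith
    exact ⟨1, 0, s₂, by norm_num, by linarith, by simp [ha], by simp [hb, hzero]⟩
  · refine ⟨b / s₂, a / s₂, s₂, ?_, by linarith, by field_simp, by field_simp⟩
    field_simp
    linarith

namespace Matrix

lemma det_submatrix_succ_succ_of_row_zero {R : Type*} [CommRing R] {n : ℕ}
    (A : Matrix (Fin (n + 1)) (Fin (n + 1)) R)
    (h : ∀ j, A 0 j = (1 : Matrix (Fin (n + 1)) (Fin (n + 1)) R) 0 j) :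
    (A.submatrix Fin.succ Fin.succ).det = A.det := by
  rw [det_succ_row_zero A, Fin.sum_univ_succ]
  simp [h, (Fin.succ_ne_zero _).symm]

lemma submatrix_succ_succ_mul {R : Type*} [NonUnitalNonAssocSemiring R] {n : ℕ}
    (A B : Matrix (Fin (n + 1)) (Fin (n + 1)) R) (h : ∀ i : Fin n, A i.succ 0 = 0) :
    (A * B).submatrix Fin.succ Fin.succ =
      A.submatrix Fin.succ Fin.succ * B.submatrix Fin.succ Fin.succ := by
  ext i j
  simp [mul_apply, Fin.sum_univ_succ, h]

lemma star_mul_apply_of_col_eq {n α : Type*} [Fintype n] [DecidableEq n] [CommRing α]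
    [StarRing α] {R M : Matrix n n α} (hR : R ∈ unitaryGroup n α) {j : n}
    (hcol : ∀ k, M k j = R k j) (i : n) :
    (star R * M) i j = (1 : Matrix n n α) i j := by
  rw [← mem_unitaryGroup_iff'.mp hR, mul_apply, mul_apply]
  simp only [hcol]

def pauli : Fin 4 → Matrix (Fin 2) (Fin 2) ℂ :=
  ![1, !![0, 1; 1, 0], !![0, -I; I, 0], !![1, 0; 0, -1]]

lemma pauli_zero : pauli 0 = 1 := rfl

lemma conjTranspose_pauli (j : Fin 4) : (pauli j)ᴴ = pauli j := by
  fin_cases j <;> ext p q <;> fin_cases p <;> fin_cases q <;> simp [pauli]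

lemma pauli_mul_self (j : Fin 4) : pauli j * pauli j = 1 := by
  fin_cases j <;> ext p q <;> fin_cases p <;> fin_cases q <;>
    simp [pauli, mul_apply, Fin.sum_univ_succ, one_apply]

lemma pauli_mem_unitaryGroup (j : Fin 4) : pauli j ∈ unitaryGroup (Fin 2) ℂ := by
  rw [mem_unitaryGroup_iff, star_eq_conjTranspose, conjTranspose_pauli, pauli_mul_self]

lemma trace_pauli_mul_pauli (i j : Fin 4) :
    (pauli i * pauli j).trace / 2 = (1 : Matrix (Fin 4) (Fin 4) ℂ) i j := by
  fin_cases i <;> fin_cases j <;> simp [pauli, trace, Fin.sum_univ_succ]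

lemma sum_pauli_smul (M : Matrix (Fin 2) (Fin 2) ℂ) :
    ∑ i, ((pauli i * M).trace / 2) • pauli i = M := by
  ext p q
  fin_cases p <;> fin_cases q <;>
    simp [pauli, trace, mul_apply, Fin.sum_univ_succ, sum_apply] <;> ring_nf <;>
    simp [I_sq] <;> ring

/-- The matrix of `X ↦ U * X * W` in the basis `pauli`. -/
def sandwichMatrix (U W : Matrix (Fin 2) (Fin 2) ℂ) : Matrix (Fin 4) (Fin 4) ℂ :=
  of fun i j => (pauli i * U * pauli j * W).trace / 2

lemma sandwichMatrix_apply (U W : Matrix (Fin 2) (Fin 2) ℂ) (i j : Fin 4) :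
    sandwichMatrix U W i j = (pauli i * (U * pauli j * W)).trace / 2 := by
  simp only [sandwichMatrix, of_apply, Matrix.mul_assoc]

lemma sum_sandwichMatrix_smul (U W : Matrix (Fin 2) (Fin 2) ℂ) (j : Fin 4) :
    ∑ i, sandwichMatrix U W i j • pauli i = U * pauli j * W := by
  simp only [sandwichMatrix_apply, sum_pauli_smul]

lemma sandwichMatrix_one_one : sandwichMatrix 1 1 = 1 := by
  ext i j
  rw [sandwichMatrix_apply, Matrix.one_mul, Matrix.mul_one, trace_pauli_mul_pauli]

lemma sandwichMatrix_mul (U V W X : Matrix (Fin 2) (Fin 2) ℂ) :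
    sandwichMatrix (U * V) (X * W) = sandwichMatrix U W * sandwichMatrix V X := by
  ext i k
  have hsplit : U * V * pauli k * (X * W) = U * (V * pauli k * X) * W := by
    simp only [Matrix.mul_assoc]
  rw [sandwichMatrix_apply, hsplit, ← sum_sandwichMatrix_smul V X k]
  simp only [Matrix.mul_sum, Matrix.sum_mul, Matrix.mul_smul, Matrix.smul_mul, trace_sum,
    trace_smul, Finset.sum_div, mul_apply, sandwichMatrix_apply, smul_eq_mul, mul_div_assoc]
  exact Finset.sum_congr rfl fun j _ => by rw [mul_comm, Matrix.mul_assoc, Matrix.mul_assoc]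

lemma sandwichMatrix_eq_one_iff (U W : Matrix (Fin 2) (Fin 2) ℂ) :
    sandwichMatrix U W = 1 ↔ ∀ j, U * pauli j * W = pauli j := by
  refine ⟨fun h j => ?_, fun h => ?_⟩
  · rw [← sum_sandwichMatrix_smul, h]
    simp [one_apply]
  · ext i j
    rw [sandwichMatrix_apply, h, trace_pauli_mul_pauli]

lemma sandwichMatrix_zero_apply {U W : Matrix (Fin 2) (Fin 2) ℂ} (h : W * U = 1) (j : Fin 4) :
    sandwichMatrix U W 0 j = (1 : Matrix (Fin 4) (Fin 4) ℂ) 0 j := by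
  rw [sandwichMatrix_apply, pauli_zero, Matrix.one_mul, trace_mul_cycle, h, Matrix.one_mul,
    ← trace_pauli_mul_pauli, pauli_zero, Matrix.one_mul]

lemma sandwichMatrix_apply_zero {U W : Matrix (Fin 2) (Fin 2) ℂ} (h : U * W = 1) (i : Fin 4) :
    sandwichMatrix U W i 0 = (1 : Matrix (Fin 4) (Fin 4) ℂ) i 0 := by
  rw [sandwichMatrix_apply, pauli_zero, Matrix.mul_one, h, ← pauli_zero, trace_pauli_mul_pauli]

lemma sandwichMatrix_transpose (U W : Matrix (Fin 2) (Fin 2) ℂ) :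
    (sandwichMatrix U W)ᵀ = sandwichMatrix W U := by
  ext i j
  simp only [transpose_apply, sandwichMatrix, of_apply]
  rw [Matrix.mul_assoc (pauli j * U), trace_mul_comm]
  simp only [Matrix.mul_assoc]

lemma star_sandwichMatrix_conjTranspose (U : Matrix (Fin 2) (Fin 2) ℂ) (i j : Fin 4) :
    star (sandwichMatrix U Uᴴ i j) = sandwichMatrix U Uᴴ i j := by
  rw [sandwichMatrix, of_apply, star_div₀, ← trace_conjTranspose]
  simp only [conjTranspose_mul, conjTranspose_conjTranspose, conjTranspose_pauli]
  rw [star_ofNat, trace_mul_comm, ← Matrix.mul_assoc, Matrix.mul_assoc (pauli j * Uᴴ),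
    trace_mul_comm]
  simp only [Matrix.mul_assoc]

def pauliVec : Matrix (Fin 2 × Fin 2) (Fin 4) ℂ := of fun x j => vec (pauli j) x

lemma kronecker_mul_pauliVec (U W : Matrix (Fin 2) (Fin 2) ℂ) :
    (Wᵀ ⊗ₖ U) * pauliVec = pauliVec * sandwichMatrix U W := by
  ext x j
  have hcol := congrFun (kronecker_mulVec_vec U (pauli j) Wᵀ) x
  rw [transpose_transpose, ← sum_sandwichMatrix_smul] at hcol
  simpa [mul_apply, mulVec, dotProduct, pauliVec, sum_apply, mul_comm] using hcol

lemma det_pauliVec_submatrix_ne_zero : (pauliVec.submatrix finProdFinEquiv.symm id).det ≠ 0 := by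
  rw [det_succ_row_zero]
  simp [Fin.sum_univ_succ, pauliVec, pauli, det_succ_row_zero, finProdFinEquiv, Fin.succAbove,
    Fin.divNat, Fin.modNat]
  norm_num [Complex.ext_iff]

lemma det_sandwichMatrix (U W : Matrix (Fin 2) (Fin 2) ℂ) :
    (sandwichMatrix U W).det = (U.det * W.det) ^ 2 := by
  set e : Fin 2 × Fin 2 ≃ Fin 4 := finProdFinEquiv
  have hconj : (Wᵀ ⊗ₖ U).submatrix e.symm e.symm * pauliVec.submatrix e.symm id =
      pauliVec.submatrix e.symm id * sandwichMatrix U W := by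
    rw [submatrix_mul_equiv, kronecker_mul_pauliVec]
    exact (submatrix_mul_equiv _ _ _ (Equiv.refl _) _).symm
  have hdet := congrArg det hconj
  rw [det_mul, det_mul, det_submatrix_equiv_self, det_kronecker, det_transpose, mul_comm] at hdet
  rw [← mul_left_cancel₀ det_pauliVec_submatrix_ne_zero hdet]
  simp only [Fintype.card_fin]
  ring

/-- For unitary `U`, the matrix of `X ↦ U * X * Uᴴ` on the traceless Hermitian matrices in the
basis `pauli 1, pauli 2, pauli 3`. -/
def adjointMatrix (U : Matrix (Fin 2) (Fin 2) ℂ) : Matrix (Fin 3) (Fin 3) ℝ :=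
  of fun i j => (sandwichMatrix U Uᴴ i.succ j.succ).re

lemma map_adjointMatrix (U : Matrix (Fin 2) (Fin 2) ℂ) :
    (adjointMatrix U).map ofRealHom = (sandwichMatrix U Uᴴ).submatrix Fin.succ Fin.succ := by
  ext i j
  exact conj_eq_iff_re.mp (star_sandwichMatrix_conjTranspose U _ _)

lemma adjointMatrix_one : adjointMatrix 1 = 1 := by
  ext i j
  simp [adjointMatrix, sandwichMatrix_one_one, one_apply, apply_ite Complex.re]

lemma adjointMatrix_mul {U : Matrix (Fin 2) (Fin 2) ℂ} (hU : U * Uᴴ = 1)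
    (V : Matrix (Fin 2) (Fin 2) ℂ) : adjointMatrix (U * V) = adjointMatrix U * adjointMatrix V := by
  apply map_injective (f := ofRealHom) ofReal_injective
  dsimp only
  rw [Matrix.map_mul, map_adjointMatrix, map_adjointMatrix, map_adjointMatrix,
    conjTranspose_mul, sandwichMatrix_mul]
  refine submatrix_succ_succ_mul _ _ fun i => ?_
  simp [sandwichMatrix_apply_zero hU]

lemma adjointMatrix_transpose (U : Matrix (Fin 2) (Fin 2) ℂ) :
    (adjointMatrix U)ᵀ = adjointMatrix Uᴴ := by
  ext i j
  simp [adjointMatrix, ← sandwichMatrix_transpose U Uᴴ]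

lemma adjointMatrix_mem_orthogonalGroup {U : Matrix (Fin 2) (Fin 2) ℂ}
    (hU : U ∈ unitaryGroup (Fin 2) ℂ) : adjointMatrix U ∈ orthogonalGroup (Fin 3) ℝ := by
  have hUU : U * Uᴴ = 1 := hU.2
  rw [mem_orthogonalGroup_iff, adjointMatrix_transpose, ← adjointMatrix_mul hUU, hUU,
    adjointMatrix_one]

lemma det_adjointMatrix {U : Matrix (Fin 2) (Fin 2) ℂ} (hU : U ∈ unitaryGroup (Fin 2) ℂ) :
    (adjointMatrix U).det = 1 := by
  have hUU : U * Uᴴ = 1 := hU.2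
  have hUU' : Uᴴ * U = 1 := hU.1
  have hdet := ofRealHom.map_det (adjointMatrix U)
  rw [RingHom.mapMatrix_apply, map_adjointMatrix,
    det_submatrix_succ_succ_of_row_zero _ (sandwichMatrix_zero_apply hUU'), det_sandwichMatrix,
    ← det_mul, hUU, det_one, one_pow, ofRealHom_eq_coe] at hdet
  exact_mod_cast hdet

lemma adjointMatrix_eq_one_iff {U : Matrix (Fin 2) (Fin 2) ℂ} (hU : U ∈ unitaryGroup (Fin 2) ℂ) :
    adjointMatrix U = 1 ↔ ∀ j, Commute U (pauli j) := by
  have hsandwich : adjointMatrix U = 1 ↔ sandwichMatrix U Uᴴ = 1 := by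
    rw [← (map_injective (f := ofRealHom) ofReal_injective).eq_iff, map_adjointMatrix,
      Matrix.map_one _ (by simp) (by simp)]
    refine ⟨fun h => ?_, fun h => by rw [h]; ext i j; simp [one_apply]⟩
    ext i j
    refine Fin.cases ?_ (fun i => ?_) i
    · exact sandwichMatrix_zero_apply hU.1 j
    refine Fin.cases ?_ (fun j => ?_) j
    · exact sandwichMatrix_apply_zero hU.2 _
    · simpa [one_apply] using congrFun (congrFun h i) j
  simp only [hsandwich, sandwichMatrix_eq_one_iff, commute_unitary_iff_star_right_conjugate hU]
  rfl

def adjointRep : unitaryGroup (Fin 2) ℂ →* SO3 where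
  toFun U := ⟨⟨adjointMatrix U, adjointMatrix_mem_orthogonalGroup U.2⟩, det_adjointMatrix U.2⟩
  map_one' := Subtype.ext (Subtype.ext adjointMatrix_one)
  map_mul' U V := Subtype.ext (Subtype.ext (adjointMatrix_mul U.2.2 V))

@[simp]
lemma coe_adjointRep (U : unitaryGroup (Fin 2) ℂ) :
    ((adjointRep U : orthogonalGroup (Fin 3) ℝ) : Matrix (Fin 3) (Fin 3) ℝ) = adjointMatrix U :=
  rfl

lemma adjointRep_eq_one_iff {U : unitaryGroup (Fin 2) ℂ} :
    adjointRep U = 1 ↔ adjointMatrix U = 1 := by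
  simp only [Subtype.ext_iff]
  rfl

lemma mem_center_unitaryGroup_iff {U : unitaryGroup (Fin 2) ℂ} :
    U ∈ Subgroup.center (unitaryGroup (Fin 2) ℂ) ↔
      ∀ j, Commute (U : Matrix (Fin 2) (Fin 2) ℂ) (pauli j) := by
  rw [Subgroup.mem_center_iff]
  refine ⟨fun h j => ?_, fun h V => Subtype.ext ?_⟩
  · exact (congrArg Subtype.val (h ⟨pauli j, pauli_mem_unitaryGroup j⟩)).symm
  · have hV : Commute (U : Matrix (Fin 2) (Fin 2) ℂ) V := by
      rw [← sum_pauli_smul (V : Matrix (Fin 2) (Fin 2) ℂ)]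
      exact Commute.sum_right _ _ _ fun i _ => (h i).smul_right _
    exact hV.eq.symm

lemma ker_adjointRep : adjointRep.ker = Subgroup.center (unitaryGroup (Fin 2) ℂ) := by
  ext U
  rw [MonoidHom.mem_ker, adjointRep_eq_one_iff, adjointMatrix_eq_one_iff U.2,
    mem_center_unitaryGroup_iff]

def rotZ (c s : ℝ) : Matrix (Fin 3) (Fin 3) ℝ := !![c, s, 0; -s, c, 0; 0, 0, 1]

def rotX (c s : ℝ) : Matrix (Fin 3) (Fin 3) ℝ := !![1, 0, 0; 0, c, s; 0, -s, c]

/- With `c = cos θ`, `s = sin θ` these are `e^{iθ/2} exp (iθ σ₃/2)` and `e^{iθ/2} exp (iθ σ₁/2)`;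
the phase `e^{iθ/2}` makes the entries polynomial in `c` and `s`. -/
def liftRotZ (c s : ℝ) : Matrix (Fin 2) (Fin 2) ℂ := !![⟨c, s⟩, 0; 0, 1]

def liftRotX (c s : ℝ) : Matrix (Fin 2) (Fin 2) ℂ :=
  !![⟨(c + 1) / 2, s / 2⟩, ⟨(c - 1) / 2, s / 2⟩; ⟨(c - 1) / 2, s / 2⟩, ⟨(c + 1) / 2, s / 2⟩]

variable {c s : ℝ}

lemma liftRotZ_mem_unitaryGroup (h : c ^ 2 + s ^ 2 = 1) :
    liftRotZ c s ∈ unitaryGroup (Fin 2) ℂ := by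
  rw [mem_unitaryGroup_iff, star_eq_conjTranspose]
  ext i j
  fin_cases i <;> fin_cases j <;> simp [liftRotZ, mul_apply, Fin.sum_univ_succ, Complex.ext_iff]
  exact ⟨by linear_combination h, by ring⟩

lemma liftRotX_mem_unitaryGroup (h : c ^ 2 + s ^ 2 = 1) :
    liftRotX c s ∈ unitaryGroup (Fin 2) ℂ := by
  rw [mem_unitaryGroup_iff, star_eq_conjTranspose]
  ext i j
  fin_cases i <;> fin_cases j <;>
    simp [liftRotX, mul_apply, Fin.sum_univ_succ, Complex.ext_iff] <;>
    constructor <;> nlinarith [h]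

lemma adjointMatrix_liftRotZ (h : c ^ 2 + s ^ 2 = 1) :
    adjointMatrix (liftRotZ c s) = rotZ c s := by
  ext i j
  fin_cases i <;> fin_cases j <;>
    simp [adjointMatrix, sandwichMatrix, pauli, liftRotZ, rotZ, trace, mul_apply,
      Fin.sum_univ_succ]
  linear_combination h / 2

lemma adjointMatrix_liftRotX (h : c ^ 2 + s ^ 2 = 1) :
    adjointMatrix (liftRotX c s) = rotX c s := by
  ext i j
  fin_cases i <;> fin_cases j <;>
    simp [adjointMatrix, sandwichMatrix, pauli, liftRotX, rotX, trace, mul_apply,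
      Fin.sum_univ_succ] <;>
    nlinarith [h]

lemma rotZ_mul_rotX_apply_two (c₁ s₁ c₂ s₂ : ℝ) (k : Fin 3) :
    (rotZ c₁ s₁ * rotX c₂ s₂) k 2 = ![s₁ * s₂, c₁ * s₂, c₂] k := by
  fin_cases k <;> simp [rotZ, rotX, mul_apply, Fin.sum_univ_succ]

lemma eq_rotZ_of_apply_two {N : Matrix (Fin 3) (Fin 3) ℝ} (hN : N ∈ orthogonalGroup (Fin 3) ℝ)
    (hdet : N.det = 1) (hcol : ∀ i, N i 2 = (1 : Matrix (Fin 3) (Fin 3) ℝ) i 2) :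
    N 0 0 ^ 2 + N 0 1 ^ 2 = 1 ∧ N = rotZ (N 0 0) (N 0 1) := by
  have h02 : N 0 2 = 0 := hcol 0
  have h12 : N 1 2 = 0 := hcol 1
  have h22 : N 2 2 = 1 := hcol 2
  have hNN : ∀ i j, ∑ k, N k i * N k j = (1 : Matrix (Fin 3) (Fin 3) ℝ) i j := fun i j => by
    rw [← mem_unitaryGroup_iff'.mp hN, mul_apply]
    rfl
  have e02 := hNN 0 2
  have e12 := hNN 1 2
  simp only [Fin.sum_univ_three, h02, h12, h22, one_apply] at e02 e12
  have h20 : N 2 0 = 0 := by simpa using e02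
  have h21 : N 2 1 = 0 := by simpa using e12
  have e00 := hNN 0 0
  have e11 := hNN 1 1
  have e01 := hNN 0 1
  simp only [Fin.sum_univ_three, h20, h21, one_apply] at e00 e11 e01
  rw [det_fin_three, h02, h12, h22, h20, h21] at hdet
  simp only [if_true, Fin.reduceEq, if_false] at e00 e11 e01
  have h11 : N 1 1 = N 0 0 := by
    linear_combination (-N 1 1) * e00 + N 1 0 * e01 + N 0 0 * hdet
  have h10 : N 1 0 = -N 0 1 := by
    linear_combination (-N 0 1) * e00 + N 0 0 * e01 - N 1 0 * hdet
  rw [h11] at e11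
  refine ⟨by linear_combination e11, ?_⟩
  ext i j
  fin_cases i <;> fin_cases j <;> simp [rotZ, h02, h12, h22, h20, h21, h11, h10]

lemma adjointRep_surjective : Function.Surjective adjointRep := by
  rintro ⟨⟨A, hA⟩, hAdet⟩
  have hunit : A 0 2 ^ 2 + A 1 2 ^ 2 + A 2 2 ^ 2 = 1 := by
    have h := star_mul_apply_of_col_eq (j := 2) hA (fun _ => rfl) 2
    simpa [mul_apply, Fin.sum_univ_three, sq] using h
  obtain ⟨c₁, s₁, s₂, h₁, h₂, ha, hb⟩ := exists_spherical_coords hunit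
  let P : unitaryGroup (Fin 2) ℂ := ⟨liftRotZ c₁ s₁, liftRotZ_mem_unitaryGroup h₁⟩ *
    ⟨liftRotX (A 2 2) s₂, liftRotX_mem_unitaryGroup h₂⟩
  have hP : adjointMatrix P = rotZ c₁ s₁ * rotX (A 2 2) s₂ := by
    rw [UnitaryGroup.mul_val, adjointMatrix_mul (liftRotZ_mem_unitaryGroup h₁).2,
      adjointMatrix_liftRotZ h₁, adjointMatrix_liftRotX h₂]
  -- `adjointRep P` moves the third basis vector to the third column of `A`, so `N` fixes it and is
  -- a rotation about the third axis.
  set N := (adjointRep P)⁻¹ * ⟨⟨A, hA⟩, hAdet⟩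
  have hN : ∀ i, N.1.1 i 2 = (1 : Matrix (Fin 3) (Fin 3) ℝ) i 2 := by
    refine star_mul_apply_of_col_eq (adjointRep P).1.2 fun k => ?_
    rw [coe_adjointRep, hP, rotZ_mul_rotX_apply_two]
    fin_cases k <;> simp [ha, hb]
  obtain ⟨hNunit, hNrot⟩ := eq_rotZ_of_apply_two N.1.2 N.2 hN
  have hZ : adjointRep ⟨liftRotZ _ _, liftRotZ_mem_unitaryGroup hNunit⟩ = N :=
    Subtype.ext (Subtype.ext ((adjointMatrix_liftRotZ hNunit).trans hNrot.symm))
  exact ⟨P * _, by rw [map_mul, hZ, mul_inv_cancel_left]⟩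

end Matrix

end

/-- The quotient of the unitary group `U(2)` by its center is isomorphic,
as a group, to `SO(3)`. -/
theorem unitaryGroup_two_quotient_center_iso_SO3 :
    Nonempty ((Matrix.unitaryGroup (Fin 2) ℂ ⧸
        Subgroup.center (Matrix.unitaryGroup (Fin 2) ℂ)) ≃* SO3) :=
  ⟨(QuotientGroup.quotientMulEquivOfEq Matrix.ker_adjointRep.symm).trans
    (QuotientGroup.quotientKerEquivOfSurjective _ Matrix.adjointRep_surjective)⟩
end

section
/- Let p and q be coprime integers with 0 < p < q, and define f : ℚ → ℚ by f(d) = (⌈d⌉ − d)⁻¹. Then the Hirzebruch–Jung algorithm starting from 𝔡₁ = q/p terminates: there exists n ≥ 0 such that the n-th iterate f^[n](q/p) is an integer (has denominator 1); moreover, for every m ≤ n the iterate satisfies f^[m](q/p) > 1, so that every partial quotient 𝔢 = ⌈f^[m](q/p)⌉ satisfies 𝔢 ≥ 2. -/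
def hjStep (d : ℚ) : ℚ := (⌈d⌉ - d)⁻¹

theorem Function.exists_iterate_forall_lt_not_of_measure_lt {α : Type*} (f : α → α)
    (P : α → Prop) (μ : α → ℕ) (hμ : ∀ x, ¬P x → μ (f x) < μ x) (x : α) :
    ∃ n, P (f^[n] x) ∧ ∀ m < n, ¬P (f^[m] x) := by
  induction hx : μ x using Nat.strong_induction_on generalizing x with
  | _ k ih =>
    by_cases hPx : P x
    · exact ⟨0, hPx, fun m hm => absurd hm m.not_lt_zero⟩
    obtain ⟨n, hn, hbefore⟩ := ih _ (hx ▸ hμ x hPx) (f x) rfl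
    refine ⟨n + 1, hn, fun m hm => ?_⟩
    cases m with
    | zero => exact hPx
    | succ m => exact hbefore m (by omega)

section HirzebruchJung

variable {d : ℚ}

theorem ceil_sub_pos_of_den_ne_one (hd : d.den ≠ 1) : 0 < (⌈d⌉ - d : ℚ) := by
  have hne : d ≠ ⌈d⌉ := fun h => hd (h ▸ Rat.den_intCast _)
  exact sub_pos.2 ((Int.le_ceil d).lt_of_ne hne)

theorem ceil_sub_lt_one (d : ℚ) : (⌈d⌉ - d : ℚ) < 1 := by
  linarith [Int.ceil_lt_add_one d]

theorem one_lt_hjStep (hd : d.den ≠ 1) : 1 < hjStep d :=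
  one_lt_inv₀ (ceil_sub_pos_of_den_ne_one hd) |>.2 (ceil_sub_lt_one d)

/-- The denominator of `⌈d⌉ - d ∈ (0, 1)` is that of `d` and exceeds its numerator, which is the
denominator of the next step. -/
theorem hjStep_den_lt (hd : d.den ≠ 1) : (hjStep d).den < d.den := by
  have hpos := ceil_sub_pos_of_den_ne_one hd
  have hnum_pos : 0 < (⌈d⌉ - d : ℚ).num := Rat.num_pos.2 hpos
  have hnum_lt : (⌈d⌉ - d : ℚ).num < (⌈d⌉ - d : ℚ).den :=
    Rat.num_lt_denom_iff.2 (ceil_sub_lt_one d)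
  rw [hjStep, Rat.den_inv_of_ne_zero hpos.ne', ← Rat.intCast_sub_den ⌈d⌉ d]
  omega

end HirzebruchJung

theorem hirzebruchJung_terminates_general (p q : ℤ) (hp : 0 < p) (hpq : p < q) :
    ∃ n : ℕ, ((hjStep^[n]) ((q : ℚ) / (p : ℚ))).den = 1 ∧
      ∀ m ≤ n, 1 < (hjStep^[m]) ((q : ℚ) / (p : ℚ)) ∧
        2 ≤ ⌈(hjStep^[m]) ((q : ℚ) / (p : ℚ))⌉ := by
  have hstart : 1 < (q : ℚ) / p := (one_lt_div (by exact_mod_cast hp)).2 (by exact_mod_cast hpq)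
  obtain ⟨n, hint, hbefore⟩ := Function.exists_iterate_forall_lt_not_of_measure_lt hjStep
    (fun d => d.den = 1) Rat.den (fun _ hd => hjStep_den_lt hd) ((q : ℚ) / p)
  have hgt : ∀ m ≤ n, 1 < (hjStep^[m]) ((q : ℚ) / p) := by
    rintro (_ | m) hm
    · exact hstart
    · rw [Function.iterate_succ_apply']
      exact one_lt_hjStep (hbefore m (by omega))
  refine ⟨n, hint, fun m hm => ⟨hgt m hm, ?_⟩⟩
  have : (1 : ℤ) < ⌈(hjStep^[m]) ((q : ℚ) / p)⌉ := Int.lt_ceil.2 (by exact_mod_cast hgt m hm)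
  omega

/-- For coprime integers `0 < p < q`, the Hirzebruch–Jung algorithm starting from
`𝔡₁ = q/p` terminates: some iterate of `d ↦ (⌈d⌉ − d)⁻¹` at `q/p` is an integer, and up to
that point every iterate is `> 1`, so every partial quotient `⌈𝔡⌉` is `≥ 2`. -/
theorem hirzebruchJung_terminates (p q : ℤ) (hp : 0 < p) (hpq : p < q)
    (hcop : Int.gcd p q = 1) :
    ∃ n : ℕ, ((hjStep^[n]) ((q : ℚ) / (p : ℚ))).den = 1 ∧
      ∀ m ≤ n, 1 < (hjStep^[m]) ((q : ℚ) / (p : ℚ)) ∧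
        2 ≤ ⌈(hjStep^[m]) ((q : ℚ) / (p : ℚ))⌉ :=
  hirzebruchJung_terminates_general p q hp hpq
end

section
/- Let ℓ ≥ 1 be an integer, and define F : ℂ → ℂ by F(z) = z^ℓ / |z|^{ℓ−1} for z ≠ 0. Then at every point z ≠ 0, F is differentiable as a map of real vector spaces ℂ → ℂ, and the determinant of its real derivative (a real-linear endomorphism of ℂ ≅ ℝ²) equals ℓ. In particular, F pulls back the standard area form of ℂ to ℓ times the standard area form on ℂ ∖ {0}. -/
/-!
Write `F w = w ^ ℓ / ‖w‖ ^ m`. Since `F (z * w) = F z * F w`, the real derivative of `F` at `z ≠ 0`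
is `v ↦ F z * DF(1) (z⁻¹ * v)`, so its determinant is `‖F z‖² · det DF(1) / ‖z‖²`. On `ℂ ∖ {0}`,
`F = exp ∘ L ∘ log` with `L ζ = ℓ ζ - m Re ζ`, so `DF(1) = L`, which is `diag (ℓ - m, ℓ)` in the
basis `1, i`. For `m = ℓ - 1` this gives `‖F z‖ = ‖z‖` and `det = ℓ`.
-/

open Complex

theorem LinearMap.det_smul_eq_norm_mul {K L : Type*} [CommRing K] [CommRing L] [Algebra K L]
    (c : L) (f : L →ₗ[K] L) :
    LinearMap.det (c • f) = Algebra.norm K c * LinearMap.det f := by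
  rw [show c • f = Algebra.lmul K L c ∘ₗ f by ext; simp, LinearMap.det_comp, Algebra.norm_apply]

noncomputable def powDivNormPow (ℓ m : ℕ) (w : ℂ) : ℂ := w ^ ℓ / (‖w‖ : ℂ) ^ m

noncomputable def logCoordMap (ℓ m : ℕ) : ℂ →L[ℝ] ℂ :=
  (ℓ : ℂ) • ContinuousLinearMap.id ℝ ℂ - (m : ℝ) • (ofRealCLM ∘L reCLM)

lemma logCoordMap_apply (ℓ m : ℕ) (ζ : ℂ) : logCoordMap ℓ m ζ = ℓ * ζ - m * ζ.re := by
  simp [logCoordMap]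

lemma det_logCoordMap (ℓ m : ℕ) :
    LinearMap.det (logCoordMap ℓ m : ℂ →ₗ[ℝ] ℂ) = ℓ * (ℓ - m) := by
  rw [← LinearMap.det_toMatrix basisOneI, Matrix.det_fin_two]
  simp [LinearMap.toMatrix_apply, logCoordMap_apply, mul_comm]

lemma powDivNormPow_mul (ℓ m : ℕ) (z w : ℂ) :
    powDivNormPow ℓ m (z * w) = powDivNormPow ℓ m z * powDivNormPow ℓ m w := by
  simp only [powDivNormPow, norm_mul, ofReal_mul]
  ring

lemma powDivNormPow_eq_exp_logCoordMap_log (ℓ m : ℕ) {w : ℂ} (hw : w ≠ 0) :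
    powDivNormPow ℓ m w = exp (logCoordMap ℓ m (log w)) := by
  rw [logCoordMap_apply, exp_sub, exp_nat_mul, exp_nat_mul, log_re, ← ofReal_exp,
    Real.exp_log (norm_pos_iff.2 hw), exp_log hw, powDivNormPow]

lemma hasFDerivAt_powDivNormPow_one (ℓ m : ℕ) :
    HasFDerivAt (powDivNormPow ℓ m) (logCoordMap ℓ m) 1 := by
  have hlog := (hasStrictDerivAt_log (by simp : (1 : ℂ) ∈ slitPlane)).hasDerivAt.hasFDerivAt
    |>.restrictScalars ℝ
  have hexp := (hasDerivAt_exp (logCoordMap ℓ m (log 1))).hasFDerivAt.restrictScalars ℝ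
  have hcomp := hexp.comp 1 ((logCoordMap ℓ m).hasFDerivAt.comp 1 hlog)
  refine (hcomp.congr_of_eventuallyEq ?_).congr_fderiv (ContinuousLinearMap.ext fun v => by simp)
  filter_upwards [isOpen_ne.mem_nhds one_ne_zero] with w hw
  exact powDivNormPow_eq_exp_logCoordMap_log ℓ m hw

lemma hasFDerivAt_powDivNormPow (ℓ m : ℕ) {z : ℂ} (hz : z ≠ 0) :
    HasFDerivAt (powDivNormPow ℓ m)
      (powDivNormPow ℓ m z • (logCoordMap ℓ m ∘L (z⁻¹ • ContinuousLinearMap.id ℝ ℂ))) z := by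
  have hscale : HasFDerivAt (fun w => z⁻¹ * w) (z⁻¹ • ContinuousLinearMap.id ℝ ℂ) z :=
    (hasFDerivAt_id z).const_mul z⁻¹
  have hone : HasFDerivAt (powDivNormPow ℓ m) (logCoordMap ℓ m) (z⁻¹ * z) := by
    rw [inv_mul_cancel₀ hz]
    exact hasFDerivAt_powDivNormPow_one ℓ m
  refine ((hone.comp z hscale).const_mul (powDivNormPow ℓ m z)).congr_of_eventuallyEq
    (.of_forall fun w => ?_)
  simp [← powDivNormPow_mul, mul_inv_cancel_left₀ hz]

lemma det_fderiv_powDivNormPow (ℓ m : ℕ) {z : ℂ} (hz : z ≠ 0) :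
    LinearMap.det (fderiv ℝ (powDivNormPow ℓ m) z : ℂ →ₗ[ℝ] ℂ) =
      ℓ * (ℓ - m) * (‖z‖ ^ ℓ / ‖z‖ ^ m / ‖z‖) ^ 2 := by
  rw [(hasFDerivAt_powDivNormPow ℓ m hz).fderiv, ContinuousLinearMap.toLinearMap_smul,
    LinearMap.det_smul_eq_norm_mul, ContinuousLinearMap.toLinearMap_comp, LinearMap.det_comp,
    ContinuousLinearMap.toLinearMap_smul, LinearMap.det_smul_eq_norm_mul, det_logCoordMap]
  simp only [powDivNormPow, Algebra.norm_complex_apply, map_div₀, map_inv₀, normSq_eq_norm_sq,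
    norm_pow, norm_real, norm_norm, ContinuousLinearMap.coe_id, LinearMap.det_id]
  ring

/-- For `ℓ ≥ 1`, the map `F(z) = z^ℓ / |z|^{ℓ−1}` is real-differentiable at every `z ≠ 0`,
and the determinant of its real derivative (a real-linear endomorphism of `ℂ ≅ ℝ²`) equals
`ℓ`; that is, `F` pulls back the standard area form of `ℂ` to `ℓ` times the standard area
form on `ℂ ∖ {0}`. -/
theorem real_deriv_det_of_zpow_div_abs_pow (ℓ : ℕ) (hℓ : 1 ≤ ℓ) (z : ℂ) (hz : z ≠ 0) :
    DifferentiableAt ℝ (fun w : ℂ => w ^ ℓ / ((‖w‖ : ℂ) ^ (ℓ - 1))) z ∧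
    LinearMap.det
        ((fderiv ℝ (fun w : ℂ => w ^ ℓ / ((‖w‖ : ℂ) ^ (ℓ - 1))) z) :
          ℂ →ₗ[ℝ] ℂ) = (ℓ : ℝ) := by
  refine ⟨(hasFDerivAt_powDivNormPow ℓ (ℓ - 1) hz).differentiableAt, ?_⟩
  obtain ⟨n, rfl⟩ := Nat.exists_eq_add_of_le' hℓ
  rw [show (fun w : ℂ => w ^ (n + 1) / (‖w‖ : ℂ) ^ (n + 1 - 1)) = powDivNormPow (n + 1) n from rfl,
    det_fderiv_powDivNormPow _ _ hz]
  field_simp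
  push_cast
  ring
end
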